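/- arXiv:2011.05882 — 5 statements merged into one kernel-verified Lean document; each statement's English description precedes it below -/
import Mathlib

section
/- Let G be a directed partially ordered abelian group with the Riesz interpolation property which is Dedekind monotone σ-complete, and let F : ℝⁿ → E be an n-dimensional spectral resolution on the perfect effect algebra E = Γ_ea(ℤ ×ₗ G,(1,0)). Then for every nonempty set of indices {i₁ < ⋯ < i_j} ⊆ {1,…,n} and all fixed real values of the remaining coordinates, the set {F(s₁,…,sₙ) : s_{i₁},…,s_{i_j} ∈ ℝ} (the remaining coordinates held fixed) has a least upper bound in E. -/
open Classical

namespace Paper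

/-- A po-group is directed. -/
def DirectedPO (G : Type*) [AddCommGroup G] [PartialOrder G] : Prop :=
  ∀ a b : G, ∃ c, a ≤ c ∧ b ≤ c

/-- The Riesz interpolation property for a po-group `G`. -/
def RieszInterp (G : Type*) [AddCommGroup G] [PartialOrder G] : Prop :=
  ∀ a₁ a₂ b₁ b₂ : G, a₁ ≤ b₁ → a₁ ≤ b₂ → a₂ ≤ b₁ → a₂ ≤ b₂ →
    ∃ c, (a₁ ≤ c ∧ a₂ ≤ c) ∧ (c ≤ b₁ ∧ c ≤ b₂)

/-- Dedekind monotone σ-completeness of a po-group: every ascending sequence bounded above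
has a supremum and every descending sequence bounded below has an infimum. -/
def MonSigmaComplete (G : Type*) [AddCommGroup G] [PartialOrder G] : Prop :=
  (∀ f : ℕ → G, Monotone f → BddAbove (Set.range f) → ∃ s, IsLUB (Set.range f) s) ∧
  (∀ f : ℕ → G, Antitone f → BddBelow (Set.range f) → ∃ s, IsGLB (Set.range f) s)

/-- Dedekind σ-completeness: every nonempty countable subset bounded above has a supremum. -/
def DedekindSC (G : Type*) [AddCommGroup G] [PartialOrder G] : Prop :=
  ∀ S : Set G, S.Nonempty → S.Countable → BddAbove S → ∃ s, IsLUB S s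

/-- The interval algebra `Γ(ℤ ×ₗ G,(k,0)) = {a : 0 ≤ a ≤ (k,0)}` in the lexicographic
product `ℤ ×ₗ G`. -/
def Ek (G : Type*) [AddCommGroup G] [PartialOrder G] (k : ℤ) : Set (ℤ ×ₗ G) :=
  Set.Icc 0 (toLex (k, (0 : G)))

/-- The iterated difference `Δ₁(a₁,b₁)⋯Δₙ(aₙ,bₙ)F`, written as the signed sum over all
corners of the box `[a,b)`; the sign is `(-1)^(number of coordinates set to the lower
endpoint)`. -/
def volSum {M : Type*} [AddCommGroup M] {ι : Type*} [Fintype ι] [DecidableEq ι]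
    (F : (ι → ℝ) → M) (a b : ι → ℝ) : M :=
  ∑ S : Finset ι, (-1 : ℤ) ^ (Fintype.card ι - S.card) •
    F (fun i => if i ∈ S then b i else a i)

variable {G : Type*} [AddCommGroup G] [PartialOrder G]
variable {ι : Type*} [Fintype ι] [DecidableEq ι]

/-- An `n`-dimensional pseudo spectral resolution with values in `Ek G k`:
the volume condition, left-continuity, vanishing along each coordinate, and the range
has a least upper bound in `Ek G k`. -/
structure IsPseudoSR (k : ℤ) (F : (ι → ℝ) → ℤ ×ₗ G) : Prop where
  mem : ∀ t, F t ∈ Ek G k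
  vol : ∀ a b : ι → ℝ, (∀ i, a i ≤ b i) → 0 ≤ volSum F a b
  leftCont : ∀ t, IsLUB (F '' {s | ∀ i, s i < t i}) (F t)
  coordZero : ∀ (i : ι) (t : ι → ℝ),
    IsGLB (Set.range fun r => F (Function.update t i r)) 0
  rangeSup : ∃ u ∈ Ek G k, IsLUB (Set.range F) u

/-- An `n`-dimensional spectral resolution on the perfect algebra `Γ(ℤ ×ₗ G,(1,0))`:
the volume condition, left-continuity, vanishing along each coordinate, total mass `(1,0)`,
and the characteristic-point condition (v). -/
structure IsSR1 (F : (ι → ℝ) → ℤ ×ₗ G) : Prop where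
  mem : ∀ t, F t ∈ Ek G 1
  vol : ∀ a b : ι → ℝ, (∀ i, a i ≤ b i) → 0 ≤ volSum F a b
  leftCont : ∀ t, IsLUB (F '' {s | ∀ i, s i < t i}) (F t)
  coordZero : ∀ (i : ι) (t : ι → ℝ),
    IsGLB (Set.range fun r => F (Function.update t i r)) 0
  total : IsLUB (Set.range F) (toLex (1, (0 : G)))
  charPt : ∃ t0 : ι → ℝ,
    (∀ s, (ofLex (F s)).1 = 1 ↔ ∀ i, t0 i < s i) ∧
    ∃ a ∈ Ek G 1, IsGLB (F '' {s | ∀ i, t0 i < s i}) a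

/-- A two-dimensional spectral resolution on the perfect algebra `Γ(ℤ ×ₗ G,(1,0))`. -/
structure IsSR2 (F : ℝ → ℝ → ℤ ×ₗ G) : Prop where
  mem : ∀ s t, F s t ∈ Ek G 1
  vol : ∀ a₁ b₁ a₂ b₂ : ℝ, a₁ ≤ b₁ → a₂ ≤ b₂ →
    0 ≤ F b₁ b₂ - F a₁ b₂ - F b₁ a₂ + F a₁ a₂
  leftCont : ∀ s t : ℝ, IsLUB {y | ∃ s' t' : ℝ, s' < s ∧ t' < t ∧ y = F s' t'} (F s t)
  coordZero₁ : ∀ s : ℝ, IsGLB (Set.range fun t => F s t) 0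
  coordZero₂ : ∀ t : ℝ, IsGLB (Set.range fun s => F s t) 0
  total : IsLUB {y | ∃ s t : ℝ, y = F s t} (toLex (1, (0 : G)))
  charPt : ∃ s₀ t₀ : ℝ,
    (∀ s t, (ofLex (F s t)).1 = 1 ↔ (s₀ < s ∧ t₀ < t)) ∧
    ∃ a ∈ Ek G 1, IsGLB {y | ∃ s t : ℝ, s₀ < s ∧ t₀ < t ∧ y = F s t} a

/-- An observable on `Γ(ℤ ×ₗ G,(k,0))` defined on the Borel (measurable) subsets of `X`. -/
def IsObs {X : Type*} [MeasurableSpace X] (k : ℤ) (x : Set X → ℤ ×ₗ G) : Prop :=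
  (∀ A, MeasurableSet A → x A ∈ Ek G k) ∧
  x Set.univ = toLex (k, (0 : G)) ∧
  (∀ A B : Set X, MeasurableSet A → MeasurableSet B → Disjoint A B →
    x (A ∪ B) = x A + x B) ∧
  (∀ A : ℕ → Set X, (∀ i, MeasurableSet (A i)) → Monotone A →
    IsLUB (Set.range fun i => x (A i)) (x (⋃ i, A i)))

end Paper

/-!
Since `F` is monotone, a slice has the same upper bounds as the increasing
sequence `F (x k)` obtained by pushing the free coordinates to `+∞`. By the characteristic-point
condition the `F (x k)` share their first coordinate `m ∈ {0, 1}`, so once their second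
coordinates are bounded in `G`, monotone σ-completeness of `G` yields their supremum `g` and
`(m, g)` is the supremum of the slice. The bound comes from supermodularity
`F x + F y ≤ F (x ⊔ y) + F (x ⊓ y)`, a consequence of the nonnegativity of all two-dimensional
differences, which in turn follows from the `n`-dimensional volume condition by letting the other
lower endpoints tend to `-∞`.
-/

open Function Finset
open Set (range)

section Order

variable {ι β α : Type*}

theorem monotone_of_isLUB_image_lt [Preorder β] [Preorder α] {F : (ι → β) → α}
    (hF : ∀ t, IsLUB (F '' {s | ∀ i, s i < t i}) (F t)) : Monotone F := by
  intro s u hsu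
  refine (hF s).2 ?_
  rintro _ ⟨s', hs', rfl⟩
  exact (hF u).1 ⟨s', fun i => (hs' i).trans_le (hsu i), rfl⟩

theorem monotone_of_monotone_update [Fintype ι] [DecidableEq ι] [Preorder β] [Preorder α]
    {g : (ι → β) → α} (hg : ∀ h i, Monotone fun r => g (update h i r)) : Monotone g := by
  intro x y hxy
  suffices ∀ T : Finset ι, g x ≤ g (T.piecewise y x) by simpa using this univ
  intro T
  induction T using Finset.induction_on with
  | empty => simp
  | insert j T hj ih =>
    rw [piecewise_insert]
    refine ih.trans ?_
    conv_lhs => rw [← update_eq_self j (T.piecewise y x)]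
    exact hg _ j (by rw [piecewise_eq_of_notMem _ _ _ hj]; exact hxy j)

theorem isLUB_iff_isLUB_range_of_cofinal {κ : Type*} [Preorder α] {S : Set α} {f : κ → α}
    (hfS : ∀ k, f k ∈ S) (hcof : ∀ x ∈ S, ∃ k, x ≤ f k) {u : α} :
    IsLUB S u ↔ IsLUB (range f) u := by
  refine isLUB_congr (Set.ext fun v => ⟨fun hv => ?_, fun hv x hx => ?_⟩)
  · rintro _ ⟨k, rfl⟩
    exact hv (hfS k)
  · obtain ⟨k, hk⟩ := hcof x hx
    exact hk.trans (hv ⟨k, rfl⟩)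

theorem Prod.Lex.isLUB_range_of_fst_eq {κ : Type*} [Nonempty κ] [PartialOrder α] [Preorder β]
    {f : κ → α ×ₗ β} {m : α} {g : β} (hf : ∀ k, (ofLex (f k)).1 = m)
    (hg : IsLUB (range fun k => (ofLex (f k)).2) g) : IsLUB (range f) (toLex (m, g)) := by
  refine ⟨?_, fun v hv => ?_⟩
  · rintro _ ⟨k, rfl⟩
    exact Prod.Lex.le_iff'.2 ⟨(hf k).le, fun _ => hg.1 ⟨k, rfl⟩⟩
  · obtain ⟨k⟩ := ‹Nonempty κ›
    have hmv : m ≤ (ofLex v).1 := hf k ▸ (Prod.Lex.le_iff'.1 (hv ⟨k, rfl⟩)).1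
    refine Prod.Lex.le_iff'.2 ⟨hmv, fun hm => hg.2 ?_⟩
    rintro _ ⟨l, rfl⟩
    exact (Prod.Lex.le_iff'.1 (hv ⟨l, rfl⟩)).2 (by rw [hf l]; exact hm)

theorem Prod.Lex.exists_isLUB_range_of_fst_eq [PartialOrder α] [Preorder β]
    (hβ : ∀ f : ℕ → β, Monotone f → BddAbove (range f) → ∃ g, IsLUB (range f) g)
    {z : ℕ → α ×ₗ β} (hz : Monotone z) {m : α} (hfst : ∀ k, (ofLex (z k)).1 = m)
    {v : α ×ₗ β} (hv : ∀ k, z k ≤ v) (hvm : (ofLex v).1 = m) : ∃ u, IsLUB (range z) u := by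
  have hsnd : ∀ {x y : α ×ₗ β}, x ≤ y → (ofLex x).1 = m → (ofLex y).1 = m →
      (ofLex x).2 ≤ (ofLex y).2 :=
    fun hxy hx hy => (Prod.Lex.le_iff'.1 hxy).2 (hx.trans hy.symm)
  obtain ⟨g, hg⟩ := hβ (fun k => (ofLex (z k)).2)
    (fun k l hkl => hsnd (hz hkl) (hfst k) (hfst l))
    ⟨(ofLex v).2, by rintro _ ⟨k, rfl⟩; exact hsnd (hv k) (hfst k) hvm⟩
  exact ⟨_, Prod.Lex.isLUB_range_of_fst_eq hfst hg⟩

end Order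

section OrderedGroup

variable {M : Type*} [AddCommGroup M] [PartialOrder M] [IsOrderedAddMonoid M]

theorem le_zero_of_forall_le_sum {κ β : Type*} [LinearOrder β] [Nonempty β] (T : Finset κ)
    {f : κ → β → M} (hf : ∀ a, Monotone (f a)) (hf0 : ∀ a, IsGLB (range (f a)) 0) {x : M}
    (hx : ∀ c, x ≤ ∑ a ∈ T, f a c) : x ≤ 0 := by
  classical
  induction T using Finset.induction_on generalizing x with
  | empty => simpa using hx (Classical.arbitrary β)
  | insert a T ha ih =>
    refine (hf0 a).2 ?_
    rintro _ ⟨c₀, rfl⟩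
    refine sub_nonpos.1 (ih fun c => sub_le_iff_le_add'.2 ?_)
    calc x ≤ f a (min c c₀) + ∑ b ∈ T, f b (min c c₀) := by
          simpa [sum_insert ha] using hx (min c c₀)
      _ ≤ f a c₀ + ∑ b ∈ T, f b c := by
          gcongr with b
          · exact hf a (min_le_right c c₀)
          · exact hf b (min_le_left c c₀)

end OrderedGroup

section VolSumOn

variable {M : Type*} [AddCommGroup M] {ι β : Type*} [DecidableEq ι]

/-- The iterated difference `Δ_{i₁}(a,b)⋯Δ_{i_k}(a,b) F` over the coordinates `K = {i₁,…,i_k}`,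
evaluated at `a`. -/
def volSumOn (F : (ι → β) → M) (K : Finset ι) (a b : ι → β) : M :=
  ∑ S ∈ K.powerset, (-1 : ℤ) ^ (K.card - S.card) • F (S.piecewise b a)

theorem volSumOn_univ [Fintype ι] (F : (ι → ℝ) → M) (a b : ι → ℝ) :
    volSumOn F univ a b = Paper.volSum F a b := by
  rw [volSumOn, powerset_univ, card_univ]
  rfl

theorem volSumOn_empty (F : (ι → β) → M) (a b : ι → β) : volSumOn F ∅ a b = F a := by
  simp [volSumOn]

theorem volSumOn_update_right (F : (ι → β) → M) {K : Finset ι} {j : ι} (hj : j ∉ K)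
    (a b : ι → β) (c : β) : volSumOn F K a (update b j c) = volSumOn F K a b := by
  refine sum_congr rfl fun S hS => ?_
  congr 2
  refine piecewise_congr _ (fun i hi => update_of_ne ?_ _ _) fun _ _ => rfl
  rintro rfl
  exact hj (mem_powerset.1 hS hi)

theorem volSumOn_insert (F : (ι → β) → M) {K : Finset ι} {j : ι} (hj : j ∉ K) (a b : ι → β) :
    volSumOn F (insert j K) a b = volSumOn F K (update a j (b j)) b - volSumOn F K a b := by
  rw [volSumOn, sum_powerset_insert hj, card_insert_of_notMem hj, add_comm, sub_eq_add_neg,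
    volSumOn, volSumOn, ← sum_neg_distrib]
  congr 1 <;> refine sum_congr rfl fun S hS => ?_
  · have hjS : j ∉ S := fun h => hj (mem_powerset.1 hS h)
    rw [card_insert_of_notMem hjS, Nat.add_sub_add_right, piecewise_insert,
      update_piecewise_of_notMem _ _ _ hjS]
  · rw [Nat.succ_sub (card_le_card (mem_powerset.1 hS)), pow_succ, mul_neg_one, neg_smul]

theorem volSumOn_pair_update (F : (ι → β) → M) {i j : ι} (hij : i ≠ j) (h : ι → β)
    (r r' q q' : β) :
    volSumOn F {i, j} (update (update h i r) j q) (update (update h i r') j q') =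
      (F (update (update h i r') j q') - F (update (update h i r) j q')) -
        (F (update (update h i r') j q) - F (update (update h i r) j q)) := by
  have hi : i ∉ ({j} : Finset ι) := by simpa using hij
  rw [volSumOn_insert F hi, ← insert_empty, volSumOn_insert F (notMem_empty j),
    volSumOn_insert F (notMem_empty j)]
  simp only [volSumOn_empty, update_self, update_of_ne hij, update_idem,
    update_comm hij.symm]
  abel

end VolSumOn

section Supermodularity

variable {M : Type*} [AddCommGroup M] [PartialOrder M] [IsOrderedAddMonoid M]
  {ι β : Type*} [DecidableEq ι] [LinearOrder β] {F : (ι → β) → M}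

/-- Lowering the fixed coordinate `a j` to `c` decreases `Δ_K F (a, b)` by a `Δ_j Δ_K F ≥ 0`,
and as `c → -∞` every corner of the lowered difference decreases to `0`. -/
theorem volSumOn_nonneg_of_insert (hF : Monotone F)
    (hF0 : ∀ i t, IsGLB (range fun r => F (update t i r)) 0) {K : Finset ι} {j : ι} (hj : j ∉ K)
    (hK : ∀ a b, a ≤ b → 0 ≤ volSumOn F (insert j K) a b) {a b : ι → β} (hab : a ≤ b) :
    0 ≤ volSumOn F K a b := by
  have hF_nonneg : ∀ s, 0 ≤ F s := fun s => (hF0 j s).1 ⟨s j, congrArg F (update_eq_self j s)⟩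
  have hlower : ∀ c, volSumOn F K (update a j (min c (a j))) b ≤ volSumOn F K a b := by
    intro c
    have hle : update a j (min c (a j)) ≤ update b j (a j) := by
      intro i
      rcases eq_or_ne i j with rfl | hij
      · simp
      · simpa [update_of_ne hij] using hab i
    have := hK _ _ hle
    rwa [volSumOn_insert F hj, update_idem, update_self, update_eq_self,
      volSumOn_update_right F hj, volSumOn_update_right F hj, sub_nonneg] at this
  have hcorners : ∀ c, -volSumOn F K a b ≤
      ∑ S ∈ K.powerset, F (update (S.piecewise b a) j (min c (a j))) := by
    intro c
    refine (neg_le_neg (hlower c)).trans ?_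
    rw [volSumOn, ← sum_neg_distrib]
    refine sum_le_sum fun S hS => ?_
    rw [update_piecewise_of_notMem _ _ _ fun h => hj (mem_powerset.1 hS h)]
    have := hF_nonneg (S.piecewise b (update a j (min c (a j))))
    rcases neg_one_pow_eq_or ℤ (K.card - S.card) with h | h
    · simpa [h] using (neg_nonpos.2 this).trans this
    · simp [h]
  have hinf : ∀ p : ι → β, IsGLB (range fun c => F (update p j (min c (a j)))) 0 := by
    refine fun p => ⟨?_, fun z hz => (hF0 j p).2 ?_⟩
    · rintro _ ⟨c, rfl⟩
      exact hF_nonneg _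
    · rintro _ ⟨r, rfl⟩
      exact (hz ⟨r, rfl⟩).trans (hF (update_mono (min_le_left r (a j))))
  have hmono : ∀ p : ι → β, Monotone fun c => F (update p j (min c (a j))) :=
    fun p c c' hc => hF (update_mono (min_le_min_right (a j) hc))
  have : Nonempty β := ⟨a j⟩
  exact neg_nonpos.1 (le_zero_of_forall_le_sum K.powerset (fun _ => hmono _)
    (fun _ => hinf _) hcorners)

theorem volSumOn_nonneg [Fintype ι] (hF : Monotone F)
    (hF0 : ∀ i t, IsGLB (range fun r => F (update t i r)) 0)
    (hvol : ∀ a b, a ≤ b → 0 ≤ volSumOn F univ a b) (K : Finset ι) {a b : ι → β} (hab : a ≤ b) :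
    0 ≤ volSumOn F K a b := by
  suffices ∀ L : Finset ι, ∀ a b : ι → β, a ≤ b → 0 ≤ volSumOn F Lᶜ a b by
    simpa using this Kᶜ a b hab
  intro L
  induction L using Finset.induction_on with
  | empty => simpa using hvol
  | insert j L hj ih =>
    rw [compl_insert]
    refine fun a b hab => volSumOn_nonneg_of_insert hF hF0 (notMem_erase j Lᶜ) ?_ hab
    rwa [insert_erase (mem_compl.2 hj)]

theorem monotone_sub_update [Fintype ι]
    (hF : ∀ i j, i ≠ j → ∀ a b, a ≤ b → 0 ≤ volSumOn F {i, j} a b) (i : ι) {r r' : β}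
    (hr : r ≤ r') : Monotone fun h => F (update h i r') - F (update h i r) := by
  refine monotone_of_monotone_update fun h j q q' hq => ?_
  rcases eq_or_ne j i with rfl | hji
  · simp
  · have hle : update (update h i r) j q ≤ update (update h i r') j q' := by
      intro l
      rcases eq_or_ne l j with rfl | hlj
      · simpa
      rcases eq_or_ne l i with rfl | hli
      · simpa [update_of_ne hlj]
      · simp [update_of_ne hlj, update_of_ne hli]
    have := hF i j hji.symm _ _ hle
    rw [volSumOn_pair_update F hji.symm, sub_nonneg] at this
    simpa only [update_comm hji] using this

theorem add_le_sup_add_inf [Fintype ι]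
    (hF : ∀ i {r r' : β}, r ≤ r' → Monotone fun h => F (update h i r') - F (update h i r))
    (x y : ι → β) : F x + F y ≤ F (x ⊔ y) + F (x ⊓ y) := by
  suffices ∀ T : Finset ι,
      F (T.piecewise x (x ⊓ y)) + F y ≤ F (T.piecewise (x ⊔ y) y) + F (x ⊓ y) by
    simpa using this univ
  intro T
  induction T using Finset.induction_on with
  | empty => simp [add_comm]
  | insert j T hj ih =>
    set p := T.piecewise x (x ⊓ y)
    set q := T.piecewise (x ⊔ y) y
    have hpq : p ≤ q := piecewise_le_piecewise _ le_sup_left inf_le_right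
    have hstep : F (update p j (x j)) - F p ≤ F (update q j (max (x j) (y j))) - F q := by
      conv_lhs => rw [← update_eq_self j p]
      conv_rhs => rw [← update_eq_self j q]
      simp only [p, q, piecewise_eq_of_notMem _ _ _ hj, Pi.inf_apply]
      rcases le_total (x j) (y j) with hxy | hxy
      · simp [hxy]
      · simpa [hxy] using hF j hxy hpq
    rw [piecewise_insert, piecewise_insert]
    calc F (update p j (x j)) + F y
        = (F p + F y) + (F (update p j (x j)) - F p) := by abel
      _ ≤ (F q + F (x ⊓ y)) + (F (update q j (max (x j) (y j))) - F q) := add_le_add ih hstep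
      _ = _ := by simp only [Pi.sup_apply]; abel

end Supermodularity

theorem add_le_sup_add_inf_of_volSum_nonneg {M ι : Type*} [AddCommGroup M] [PartialOrder M]
    [IsOrderedAddMonoid M] [Fintype ι] [DecidableEq ι] {F : (ι → ℝ) → M} (hF : Monotone F)
    (hF0 : ∀ i t, IsGLB (range fun r => F (update t i r)) 0)
    (hvol : ∀ a b : ι → ℝ, (∀ i, a i ≤ b i) → 0 ≤ Paper.volSum F a b) (x y : ι → ℝ) :
    F x + F y ≤ F (x ⊔ y) + F (x ⊓ y) := by
  have hvol' : ∀ a b, a ≤ b → 0 ≤ volSumOn F univ a b := fun a b hab => by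
    simpa [volSumOn_univ] using hvol a b hab
  exact add_le_sup_add_inf (fun i _ _ hr => monotone_sub_update
    (fun _ _ _ _ _ hab => volSumOn_nonneg hF hF0 hvol' _ hab) i hr) x y

theorem isLUB_image_slice_iff {ι α : Type*} [Finite ι] [DecidableEq ι] [Preorder α]
    {F : (ι → ℝ) → α} (hF : Monotone F) (J : Finset ι) (t : ι → ℝ) (c : ℝ) {u : α} :
    IsLUB (F '' {s | ∀ i ∉ J, s i = t i}) u ↔
      IsLUB (range fun k : ℕ => F (J.piecewise (fun _ => c + k) t)) u := by
  refine isLUB_iff_isLUB_range_of_cofinal (fun _ => ?_) ?_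
  · exact Set.mem_image_of_mem F fun _ hi => piecewise_eq_of_notMem _ _ _ hi
  rintro _ ⟨s, hs, rfl⟩
  obtain ⟨B, hB⟩ := Finite.exists_le s
  obtain ⟨k, hk⟩ := exists_nat_ge (B - c)
  refine ⟨k, hF fun i => ?_⟩
  by_cases hi : i ∈ J
  · simp only [piecewise_eq_of_mem _ _ _ hi]
    linarith [hB i]
  · simp [hi, hs i hi]

namespace Paper

variable {G : Type*} [AddCommGroup G] [PartialOrder G]

theorem fst_mem_Icc_of_mem_Ek {k : ℤ} {x : ℤ ×ₗ G} (hx : x ∈ Ek G k) :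
    (ofLex x).1 ∈ Set.Icc 0 k :=
  ⟨(Prod.Lex.le_iff'.1 hx.1).1, (Prod.Lex.le_iff'.1 hx.2).1⟩

theorem fst_eq_of_charPt {ι : Type*} {F : (ι → ℝ) → ℤ ×ₗ G} (hE : ∀ s, F s ∈ Ek G 1)
    {t0 : ι → ℝ} (hchar : ∀ s, (ofLex (F s)).1 = 1 ↔ ∀ i, t0 i < s i) {s s' : ι → ℝ}
    (h : (∀ i, t0 i < s i) ↔ ∀ i, t0 i < s' i) : (ofLex (F s)).1 = (ofLex (F s')).1 := by
  by_cases hs : ∀ i, t0 i < s i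
  · rw [(hchar s).2 hs, (hchar s').2 (h.1 hs)]
  · have hne := mt (hchar s).1 hs
    have hne' := mt (hchar s').1 (mt h.2 hs)
    obtain ⟨hlo, hhi⟩ := fst_mem_Icc_of_mem_Ek (hE s)
    obtain ⟨hlo', hhi'⟩ := fst_mem_Icc_of_mem_Ek (hE s')
    omega

end Paper

open Paper in
theorem statement_0_general {G : Type*} [AddCommGroup G] [PartialOrder G]
    [CovariantClass G G (· + ·) (· ≤ ·)]
    (hsc : MonSigmaComplete G)
    {n : ℕ} (F : (Fin n → ℝ) → ℤ ×ₗ G) (hF : IsSR1 F)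
    (J : Finset (Fin n)) (t : Fin n → ℝ) :
    ∃ u ∈ Ek G 1, IsLUB (F '' {s | ∀ i ∉ J, s i = t i}) u := by
  have : IsOrderedAddMonoid G := { add_le_add_left := fun _ _ h c => add_le_add_left h c }
  have hmono : Monotone F := monotone_of_isLUB_image_lt hF.leftCont
  obtain ⟨t0, hchar, -⟩ := hF.charPt
  obtain ⟨c, hc⟩ := Finite.exists_le fun i => t0 i + 1
  set x : ℕ → Fin n → ℝ := fun k => J.piecewise (fun _ => c + k) t
  have hx_gt : ∀ k, (∀ i, t0 i < x k i) ↔ ∀ i ∉ J, t0 i < t i := fun k => by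
    refine ⟨fun h i hi => by simpa [x, hi] using h i, fun h i => ?_⟩
    by_cases hi : i ∈ J
    · simp only [x, piecewise_eq_of_mem _ _ _ hi]
      linarith [hc i, k.cast_nonneg (α := ℝ)]
    · simpa [x, hi] using h i hi
  have hfst : ∀ k, (ofLex (F (x k))).1 = (ofLex (F (x 0))).1 := fun k =>
    fst_eq_of_charPt hF.mem hchar ((hx_gt k).trans (hx_gt 0).symm)
  -- Supermodularity against a point `w ≫ t0` bounds the sequence by an element whose first
  -- coordinate is that of `F (x 0)`: the `1` of `F w` cancels the `1` of the top element.
  set w : Fin n → ℝ := J.piecewise (fun _ => c) (t0 + 1)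
  have hw : (ofLex (F w)).1 = 1 := (hchar w).2 fun i => by
    by_cases hi : i ∈ J
    · simp only [w, piecewise_eq_of_mem _ _ _ hi]
      linarith [hc i]
    · simp [w, hi]
  have hbound : ∀ k, F (x k) ≤ toLex (1, 0) + F (x 0) - F w := fun k => by
    have hinf : x k ⊓ w ≤ x 0 := fun i => by by_cases hi : i ∈ J <;> simp [x, w, hi]
    rw [le_sub_iff_add_le]
    exact (add_le_sup_add_inf_of_volSum_nonneg hmono hF.coordZero hF.vol _ _).trans
      (add_le_add (hF.mem _).2 (hmono hinf))
  obtain ⟨u, hu⟩ := Prod.Lex.exists_isLUB_range_of_fst_eq hsc.1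
    (hmono.comp fun k l hkl => piecewise_le_piecewise _ (fun _ => by simpa using hkl) le_rfl)
    hfst hbound (by simp [hw])
  refine ⟨u, ⟨(hF.mem _).1.trans (hu.1 ⟨0, rfl⟩), hu.2 ?_⟩,
    (isLUB_image_slice_iff hmono J t c).2 hu⟩
  rintro _ ⟨k, rfl⟩
  exact (hF.mem _).2

open Paper in
/-- Lemma 2.1: for an `n`-dimensional spectral resolution `F` on the
perfect effect algebra `E = Γ_ea(ℤ ×ₗ G,(1,0))`, the supremum of `F` over any nonempty
set `J` of coordinates (the remaining coordinates being held fixed at `t`) exists in `E`. -/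
theorem statement_0 {G : Type*} [AddCommGroup G] [PartialOrder G]
    [CovariantClass G G (· + ·) (· ≤ ·)]
    (hdir : DirectedPO G) (hip : RieszInterp G) (hsc : MonSigmaComplete G)
    {n : ℕ} (F : (Fin n → ℝ) → ℤ ×ₗ G) (hF : IsSR1 F)
    (J : Finset (Fin n)) (hJ : J.Nonempty) (t : Fin n → ℝ) :
    ∃ u ∈ Ek G 1, IsLUB (F '' {s | ∀ i ∉ J, s i = t i}) u :=
  statement_0_general hsc F hF J t
end

section
/- Let G be a directed partially ordered abelian group with the Riesz interpolation property which is Dedekind monotone σ-complete, let g₀ ∈ G with g₀ ≥ 0, let k ≥ 1, and let E = {a ∈ ℤ ×ₗ G : (0,0) ≤ a ≤ (k,−g₀)}. Let (aᵢ), (bᵢ), (cᵢ), (dᵢ) be sequences in E. (1) If all four sequences are nondecreasing with least upper bounds a, b, c, d respectively, and the sequence (aᵢ + dᵢ − bᵢ − cᵢ) is nondecreasing and takes values in E, then a + d − b − c lies in E and is the least upper bound of (aᵢ + dᵢ − bᵢ − cᵢ). (2) If all four sequences are nonincreasing with greatest lower bounds a, b, c, d, and (aᵢ + dᵢ − bᵢ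 − cᵢ) is nonincreasing with values in E, then a + d − b − c lies in E and is the greatest lower bound of (aᵢ + dᵢ − bᵢ − cᵢ). (3) If all four sequences are nondecreasing with least upper bounds a, b, c, d, and (aᵢ + dᵢ − bᵢ − cᵢ) is nonincreasing with values in E, then a + d − b − c lies in E and is the greatest lower bound of (aᵢ + dᵢ − bᵢ − cᵢ). (4) If all four sequences are nonincreasing with greatest lower bounds a, b, c, d, and (aᵢ + dᵢ − bᵢ − cᵢ) is nondecreasing with values in E, then a + d − b − c lies in E and is the least upper bound of (aᵢ + dᵢ − bᵢ − cᵢ). Moreover, the same four statements hold with E replaced by the order interval {a ∈ G : 0 ≤ a ≤ u} for u ∈ G⁺. -/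
open Classical

/-!
Put `s = a + d` and `t = b + c`, so that the combination is `s - t`. Writing
`s j = (s - t) j + t j` and comparing two indices through a common larger one shows
`sup (s - t) = sup s - sup t` when `t` and `s - t` increase, and `inf (s - t) = sup s - sup t`
when `s` increases and `s - t` decreases. Cases (2) and (4) are the order duals of (1) and (3).
-/

open Set

section OrderedGroup

variable {M : Type*} [AddCommGroup M] [PartialOrder M] [IsOrderedAddMonoid M]
  {ι : Type*} [Preorder ι] [IsDirectedOrder ι]

theorem Monotone.isLUB_range_add {f g : ι → M} {x y : M} (hf : Monotone f) (hg : Monotone g)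
    (hx : IsLUB (range f) x) (hy : IsLUB (range g) y) : IsLUB (range (f + g)) (x + y) := by
  refine ⟨forall_mem_range.2 fun i => add_le_add (hx.1 ⟨i, rfl⟩) (hy.1 ⟨i, rfl⟩), ?_⟩
  intro z hz
  have hfg : ∀ i j, f i + g j ≤ z := fun i j => by
    obtain ⟨k, hik, hjk⟩ := exists_ge_ge i j
    exact (add_le_add (hf hik) (hg hjk)).trans (hz ⟨k, rfl⟩)
  have hxz : ∀ j, x ≤ z - g j := fun j =>
    hx.2 <| forall_mem_range.2 fun i => le_sub_iff_add_le.2 (hfg i j)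
  have hyz : y ≤ z - x := hy.2 <| forall_mem_range.2 fun j => le_sub_iff_add_le'.2 <|
    le_sub_iff_add_le.1 (hxz j)
  exact le_sub_iff_add_le'.1 hyz

theorem isLUB_range_sub_of_monotone {s t : ι → M} {S T : M} (ht : Monotone t)
    (hst : Monotone (s - t)) (hS : IsLUB (range s) S) (hT : IsLUB (range t) T) :
    IsLUB (range (s - t)) (S - T) := by
  constructor
  · refine forall_mem_range.2 fun i => le_sub_comm.1 (hT.2 <| forall_mem_range.2 fun j => ?_)
    obtain ⟨k, hik, hjk⟩ := exists_ge_ge i j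
    calc t j ≤ s k - (s - t) k := by simpa using ht hjk
      _ ≤ S - (s - t) i := sub_le_sub (hS.1 ⟨k, rfl⟩) (hst hik)
  · refine fun x hx => sub_le_iff_le_add.2 (hS.2 <| forall_mem_range.2 fun i => ?_)
    calc s i = (s - t) i + t i := by simp
      _ ≤ x + T := add_le_add (hx ⟨i, rfl⟩) (hT.1 ⟨i, rfl⟩)

theorem isGLB_range_sub_of_antitone {s t : ι → M} {S T : M} (hs : Monotone s)
    (hst : Antitone (s - t)) (hS : IsLUB (range s) S) (hT : IsLUB (range t) T) :
    IsGLB (range (s - t)) (S - T) := by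
  constructor
  · refine forall_mem_range.2 fun i =>
      sub_le_iff_le_add.2 (hS.2 <| forall_mem_range.2 fun m => ?_)
    obtain ⟨k, hik, hmk⟩ := exists_ge_ge i m
    calc s m ≤ s k := hs hmk
      _ = (s - t) k + t k := by simp
      _ ≤ (s - t) i + T := add_le_add (hst hik) (hT.1 ⟨k, rfl⟩)
  · refine fun x hx => le_sub_comm.1 (hT.2 <| forall_mem_range.2 fun j => ?_)
    calc t j = s j - (s - t) j := by simp
      _ ≤ S - x := sub_le_sub (hS.1 ⟨j, rfl⟩) (hx ⟨j, rfl⟩)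

end OrderedGroup

theorem IsLUB.mem_Icc_of_forall_mem {α ι : Type*} [Preorder α] [Nonempty ι] {f : ι → α}
    {x lo hi : α} (h : IsLUB (range f) x) (hf : ∀ i, f i ∈ Icc lo hi) : x ∈ Icc lo hi :=
  let i := Classical.arbitrary ι
  ⟨(hf i).1.trans (h.1 ⟨i, rfl⟩), h.2 <| forall_mem_range.2 fun j => (hf j).2⟩

theorem IsGLB.mem_Icc_of_forall_mem {α ι : Type*} [Preorder α] [Nonempty ι] {f : ι → α}
    {x lo hi : α} (h : IsGLB (range f) x) (hf : ∀ i, f i ∈ Icc lo hi) : x ∈ Icc lo hi :=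
  let i := Classical.arbitrary ι
  ⟨h.2 <| forall_mem_range.2 fun j => (hf j).1, (h.1 ⟨i, rfl⟩).trans (hf i).2⟩

section FourSequences

variable {M : Type*} [AddCommGroup M] [PartialOrder M] [IsOrderedAddMonoid M]
  {ι : Type*} [Preorder ι] [IsDirectedOrder ι] {a b c d : ι → M} {A B C D : M}

theorem isLUB_range_add_sub_sub_of_monotone (ha : Monotone a) (hb : Monotone b)
    (hc : Monotone c) (hd : Monotone d) (hA : IsLUB (range a) A) (hB : IsLUB (range b) B)
    (hC : IsLUB (range c) C) (hD : IsLUB (range d) D)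
    (he : Monotone fun i => a i + d i - b i - c i) :
    IsLUB (range fun i => a i + d i - b i - c i) (A + D - B - C) := by
  simp only [sub_sub] at he ⊢
  exact isLUB_range_sub_of_monotone (hb.add hc) he (ha.isLUB_range_add hd hA hD)
    (hb.isLUB_range_add hc hB hC)

theorem isGLB_range_add_sub_sub_of_antitone (ha : Antitone a) (hb : Antitone b)
    (hc : Antitone c) (hd : Antitone d) (hA : IsGLB (range a) A) (hB : IsGLB (range b) B)
    (hC : IsGLB (range c) C) (hD : IsGLB (range d) D)
    (he : Antitone fun i => a i + d i - b i - c i) :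
    IsGLB (range fun i => a i + d i - b i - c i) (A + D - B - C) :=
  isLUB_range_add_sub_sub_of_monotone (M := Mᵒᵈ) ha hb hc hd hA hB hC hD he

theorem isGLB_range_add_sub_sub_of_monotone (ha : Monotone a) (hb : Monotone b)
    (hc : Monotone c) (hd : Monotone d) (hA : IsLUB (range a) A) (hB : IsLUB (range b) B)
    (hC : IsLUB (range c) C) (hD : IsLUB (range d) D)
    (he : Antitone fun i => a i + d i - b i - c i) :
    IsGLB (range fun i => a i + d i - b i - c i) (A + D - B - C) := by
  simp only [sub_sub] at he ⊢
  exact isGLB_range_sub_of_antitone (ha.add hd) he (ha.isLUB_range_add hd hA hD)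
    (hb.isLUB_range_add hc hB hC)

theorem isLUB_range_add_sub_sub_of_antitone (ha : Antitone a) (hb : Antitone b)
    (hc : Antitone c) (hd : Antitone d) (hA : IsGLB (range a) A) (hB : IsGLB (range b) B)
    (hC : IsGLB (range c) C) (hD : IsGLB (range d) D)
    (he : Monotone fun i => a i + d i - b i - c i) :
    IsLUB (range fun i => a i + d i - b i - c i) (A + D - B - C) :=
  isGLB_range_add_sub_sub_of_monotone (M := Mᵒᵈ) ha hb hc hd hA hB hC hD he

end FourSequences

open Paper in
theorem statement_1_general {G : Type*} [AddCommGroup G] [PartialOrder G]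
    [CovariantClass G G (· + ·) (· ≤ ·)]
    (g₀ : G) (k : ℤ) :
    -- (1) nondecreasing sequences, nondecreasing combination
    (∀ (a b c d : ℕ → ℤ ×ₗ G) (A B C D : ℤ ×ₗ G),
      (∀ i, a i ∈ Set.Icc 0 (toLex (k, -g₀))) → (∀ i, b i ∈ Set.Icc 0 (toLex (k, -g₀))) →
      (∀ i, c i ∈ Set.Icc 0 (toLex (k, -g₀))) → (∀ i, d i ∈ Set.Icc 0 (toLex (k, -g₀))) →
      Monotone a → Monotone b → Monotone c → Monotone d →
      IsLUB (Set.range a) A → IsLUB (Set.range b) B →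
      IsLUB (Set.range c) C → IsLUB (Set.range d) D →
      (∀ i, a i + d i - b i - c i ∈ Set.Icc 0 (toLex (k, -g₀))) →
      Monotone (fun i => a i + d i - b i - c i) →
      (A + D - B - C ∈ Set.Icc 0 (toLex (k, -g₀)) ∧
        IsLUB (Set.range fun i => a i + d i - b i - c i) (A + D - B - C))) ∧
    -- (2) nonincreasing sequences, nonincreasing combination
    (∀ (a b c d : ℕ → ℤ ×ₗ G) (A B C D : ℤ ×ₗ G),
      (∀ i, a i ∈ Set.Icc 0 (toLex (k, -g₀))) → (∀ i, b i ∈ Set.Icc 0 (toLex (k, -g₀))) →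
      (∀ i, c i ∈ Set.Icc 0 (toLex (k, -g₀))) → (∀ i, d i ∈ Set.Icc 0 (toLex (k, -g₀))) →
      Antitone a → Antitone b → Antitone c → Antitone d →
      IsGLB (Set.range a) A → IsGLB (Set.range b) B →
      IsGLB (Set.range c) C → IsGLB (Set.range d) D →
      (∀ i, a i + d i - b i - c i ∈ Set.Icc 0 (toLex (k, -g₀))) →
      Antitone (fun i => a i + d i - b i - c i) →
      (A + D - B - C ∈ Set.Icc 0 (toLex (k, -g₀)) ∧
        IsGLB (Set.range fun i => a i + d i - b i - c i) (A + D - B - C))) ∧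
    -- (3) nondecreasing sequences, nonincreasing combination
    (∀ (a b c d : ℕ → ℤ ×ₗ G) (A B C D : ℤ ×ₗ G),
      (∀ i, a i ∈ Set.Icc 0 (toLex (k, -g₀))) → (∀ i, b i ∈ Set.Icc 0 (toLex (k, -g₀))) →
      (∀ i, c i ∈ Set.Icc 0 (toLex (k, -g₀))) → (∀ i, d i ∈ Set.Icc 0 (toLex (k, -g₀))) →
      Monotone a → Monotone b → Monotone c → Monotone d →
      IsLUB (Set.range a) A → IsLUB (Set.range b) B →
      IsLUB (Set.range c) C → IsLUB (Set.range d) D →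
      (∀ i, a i + d i - b i - c i ∈ Set.Icc 0 (toLex (k, -g₀))) →
      Antitone (fun i => a i + d i - b i - c i) →
      (A + D - B - C ∈ Set.Icc 0 (toLex (k, -g₀)) ∧
        IsGLB (Set.range fun i => a i + d i - b i - c i) (A + D - B - C))) ∧
    -- (4) nonincreasing sequences, nondecreasing combination
    (∀ (a b c d : ℕ → ℤ ×ₗ G) (A B C D : ℤ ×ₗ G),
      (∀ i, a i ∈ Set.Icc 0 (toLex (k, -g₀))) → (∀ i, b i ∈ Set.Icc 0 (toLex (k, -g₀))) →
      (∀ i, c i ∈ Set.Icc 0 (toLex (k, -g₀))) → (∀ i, d i ∈ Set.Icc 0 (toLex (k, -g₀))) →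
      Antitone a → Antitone b → Antitone c → Antitone d →
      IsGLB (Set.range a) A → IsGLB (Set.range b) B →
      IsGLB (Set.range c) C → IsGLB (Set.range d) D →
      (∀ i, a i + d i - b i - c i ∈ Set.Icc 0 (toLex (k, -g₀))) →
      Monotone (fun i => a i + d i - b i - c i) →
      (A + D - B - C ∈ Set.Icc 0 (toLex (k, -g₀)) ∧
        IsLUB (Set.range fun i => a i + d i - b i - c i) (A + D - B - C))) ∧
    -- the same four statements in an interval `[0,u]` of `G` itself
    (∀ u : G, 0 ≤ u →
      (∀ (a b c d : ℕ → G) (A B C D : G),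
        (∀ i, a i ∈ Set.Icc 0 u) → (∀ i, b i ∈ Set.Icc 0 u) →
        (∀ i, c i ∈ Set.Icc 0 u) → (∀ i, d i ∈ Set.Icc 0 u) →
        Monotone a → Monotone b → Monotone c → Monotone d →
        IsLUB (Set.range a) A → IsLUB (Set.range b) B →
        IsLUB (Set.range c) C → IsLUB (Set.range d) D →
        (∀ i, a i + d i - b i - c i ∈ Set.Icc 0 u) →
        Monotone (fun i => a i + d i - b i - c i) →
        (A + D - B - C ∈ Set.Icc 0 u ∧
          IsLUB (Set.range fun i => a i + d i - b i - c i) (A + D - B - C))) ∧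
      (∀ (a b c d : ℕ → G) (A B C D : G),
        (∀ i, a i ∈ Set.Icc 0 u) → (∀ i, b i ∈ Set.Icc 0 u) →
        (∀ i, c i ∈ Set.Icc 0 u) → (∀ i, d i ∈ Set.Icc 0 u) →
        Antitone a → Antitone b → Antitone c → Antitone d →
        IsGLB (Set.range a) A → IsGLB (Set.range b) B →
        IsGLB (Set.range c) C → IsGLB (Set.range d) D →
        (∀ i, a i + d i - b i - c i ∈ Set.Icc 0 u) →
        Antitone (fun i => a i + d i - b i - c i) →
        (A + D - B - C ∈ Set.Icc 0 u ∧
          IsGLB (Set.range fun i => a i + d i - b i - c i) (A + D - B - C))) ∧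
      (∀ (a b c d : ℕ → G) (A B C D : G),
        (∀ i, a i ∈ Set.Icc 0 u) → (∀ i, b i ∈ Set.Icc 0 u) →
        (∀ i, c i ∈ Set.Icc 0 u) → (∀ i, d i ∈ Set.Icc 0 u) →
        Monotone a → Monotone b → Monotone c → Monotone d →
        IsLUB (Set.range a) A → IsLUB (Set.range b) B →
        IsLUB (Set.range c) C → IsLUB (Set.range d) D →
        (∀ i, a i + d i - b i - c i ∈ Set.Icc 0 u) →
        Antitone (fun i => a i + d i - b i - c i) →
        (A + D - B - C ∈ Set.Icc 0 u ∧
          IsGLB (Set.range fun i => a i + d i - b i - c i) (A + D - B - C))) ∧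
      (∀ (a b c d : ℕ → G) (A B C D : G),
        (∀ i, a i ∈ Set.Icc 0 u) → (∀ i, b i ∈ Set.Icc 0 u) →
        (∀ i, c i ∈ Set.Icc 0 u) → (∀ i, d i ∈ Set.Icc 0 u) →
        Antitone a → Antitone b → Antitone c → Antitone d →
        IsGLB (Set.range a) A → IsGLB (Set.range b) B →
        IsGLB (Set.range c) C → IsGLB (Set.range d) D →
        (∀ i, a i + d i - b i - c i ∈ Set.Icc 0 u) →
        Monotone (fun i => a i + d i - b i - c i) →
        (A + D - B - C ∈ Set.Icc 0 u ∧
          IsLUB (Set.range fun i => a i + d i - b i - c i) (A + D - B - C)))) := by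
  have : IsOrderedAddMonoid G := { add_le_add_left := fun _ _ h c => add_le_add_left h c }
  refine ⟨?_, ?_, ?_, ?_, fun u _ => ⟨?_, ?_, ?_, ?_⟩⟩ <;>
    intro a b c d A B C D _ _ _ _ ha hb hc hd hA hB hC hD hmem he
  · have h := isLUB_range_add_sub_sub_of_monotone ha hb hc hd hA hB hC hD he
    exact ⟨h.mem_Icc_of_forall_mem hmem, h⟩
  · have h := isGLB_range_add_sub_sub_of_antitone ha hb hc hd hA hB hC hD he
    exact ⟨h.mem_Icc_of_forall_mem hmem, h⟩
  · have h := isGLB_range_add_sub_sub_of_monotone ha hb hc hd hA hB hC hD he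
    exact ⟨h.mem_Icc_of_forall_mem hmem, h⟩
  · have h := isLUB_range_add_sub_sub_of_antitone ha hb hc hd hA hB hC hD he
    exact ⟨h.mem_Icc_of_forall_mem hmem, h⟩
  · have h := isLUB_range_add_sub_sub_of_monotone ha hb hc hd hA hB hC hD he
    exact ⟨h.mem_Icc_of_forall_mem hmem, h⟩
  · have h := isGLB_range_add_sub_sub_of_antitone ha hb hc hd hA hB hC hD he
    exact ⟨h.mem_Icc_of_forall_mem hmem, h⟩
  · have h := isGLB_range_add_sub_sub_of_monotone ha hb hc hd hA hB hC hD he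
    exact ⟨h.mem_Icc_of_forall_mem hmem, h⟩
  · have h := isLUB_range_add_sub_sub_of_antitone ha hb hc hd hA hB hC hD he
    exact ⟨h.mem_Icc_of_forall_mem hmem, h⟩

open Paper in
/-- Lemma 2.2: limits of sequences of the form `aᵢ + dᵢ - bᵢ - cᵢ` in the
interval `[0,(k,-g₀)]` of `ℤ ×ₗ G`, in the four monotonicity combinations; and the same
in an interval `[0,u]` of `G`. -/
theorem statement_1 {G : Type*} [AddCommGroup G] [PartialOrder G]
    [CovariantClass G G (· + ·) (· ≤ ·)]
    (hdir : DirectedPO G) (hip : RieszInterp G) (hsc : MonSigmaComplete G)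
    (g₀ : G) (hg₀ : 0 ≤ g₀) (k : ℤ) (hk : 1 ≤ k) :
    -- (1) nondecreasing sequences, nondecreasing combination
    (∀ (a b c d : ℕ → ℤ ×ₗ G) (A B C D : ℤ ×ₗ G),
      (∀ i, a i ∈ Set.Icc 0 (toLex (k, -g₀))) → (∀ i, b i ∈ Set.Icc 0 (toLex (k, -g₀))) →
      (∀ i, c i ∈ Set.Icc 0 (toLex (k, -g₀))) → (∀ i, d i ∈ Set.Icc 0 (toLex (k, -g₀))) →
      Monotone a → Monotone b → Monotone c → Monotone d →
      IsLUB (Set.range a) A → IsLUB (Set.range b) B →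
      IsLUB (Set.range c) C → IsLUB (Set.range d) D →
      (∀ i, a i + d i - b i - c i ∈ Set.Icc 0 (toLex (k, -g₀))) →
      Monotone (fun i => a i + d i - b i - c i) →
      (A + D - B - C ∈ Set.Icc 0 (toLex (k, -g₀)) ∧
        IsLUB (Set.range fun i => a i + d i - b i - c i) (A + D - B - C))) ∧
    -- (2) nonincreasing sequences, nonincreasing combination
    (∀ (a b c d : ℕ → ℤ ×ₗ G) (A B C D : ℤ ×ₗ G),
      (∀ i, a i ∈ Set.Icc 0 (toLex (k, -g₀))) → (∀ i, b i ∈ Set.Icc 0 (toLex (k, -g₀))) →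
      (∀ i, c i ∈ Set.Icc 0 (toLex (k, -g₀))) → (∀ i, d i ∈ Set.Icc 0 (toLex (k, -g₀))) →
      Antitone a → Antitone b → Antitone c → Antitone d →
      IsGLB (Set.range a) A → IsGLB (Set.range b) B →
      IsGLB (Set.range c) C → IsGLB (Set.range d) D →
      (∀ i, a i + d i - b i - c i ∈ Set.Icc 0 (toLex (k, -g₀))) →
      Antitone (fun i => a i + d i - b i - c i) →
      (A + D - B - C ∈ Set.Icc 0 (toLex (k, -g₀)) ∧
        IsGLB (Set.range fun i => a i + d i - b i - c i) (A + D - B - C))) ∧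
    -- (3) nondecreasing sequences, nonincreasing combination
    (∀ (a b c d : ℕ → ℤ ×ₗ G) (A B C D : ℤ ×ₗ G),
      (∀ i, a i ∈ Set.Icc 0 (toLex (k, -g₀))) → (∀ i, b i ∈ Set.Icc 0 (toLex (k, -g₀))) →
      (∀ i, c i ∈ Set.Icc 0 (toLex (k, -g₀))) → (∀ i, d i ∈ Set.Icc 0 (toLex (k, -g₀))) →
      Monotone a → Monotone b → Monotone c → Monotone d →
      IsLUB (Set.range a) A → IsLUB (Set.range b) B →
      IsLUB (Set.range c) C → IsLUB (Set.range d) D →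
      (∀ i, a i + d i - b i - c i ∈ Set.Icc 0 (toLex (k, -g₀))) →
      Antitone (fun i => a i + d i - b i - c i) →
      (A + D - B - C ∈ Set.Icc 0 (toLex (k, -g₀)) ∧
        IsGLB (Set.range fun i => a i + d i - b i - c i) (A + D - B - C))) ∧
    -- (4) nonincreasing sequences, nondecreasing combination
    (∀ (a b c d : ℕ → ℤ ×ₗ G) (A B C D : ℤ ×ₗ G),
      (∀ i, a i ∈ Set.Icc 0 (toLex (k, -g₀))) → (∀ i, b i ∈ Set.Icc 0 (toLex (k, -g₀))) →
      (∀ i, c i ∈ Set.Icc 0 (toLex (k, -g₀))) → (∀ i, d i ∈ Set.Icc 0 (toLex (k, -g₀))) →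
      Antitone a → Antitone b → Antitone c → Antitone d →
      IsGLB (Set.range a) A → IsGLB (Set.range b) B →
      IsGLB (Set.range c) C → IsGLB (Set.range d) D →
      (∀ i, a i + d i - b i - c i ∈ Set.Icc 0 (toLex (k, -g₀))) →
      Monotone (fun i => a i + d i - b i - c i) →
      (A + D - B - C ∈ Set.Icc 0 (toLex (k, -g₀)) ∧
        IsLUB (Set.range fun i => a i + d i - b i - c i) (A + D - B - C))) ∧
    -- the same four statements in an interval `[0,u]` of `G` itself
    (∀ u : G, 0 ≤ u →
      (∀ (a b c d : ℕ → G) (A B C D : G),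
        (∀ i, a i ∈ Set.Icc 0 u) → (∀ i, b i ∈ Set.Icc 0 u) →
        (∀ i, c i ∈ Set.Icc 0 u) → (∀ i, d i ∈ Set.Icc 0 u) →
        Monotone a → Monotone b → Monotone c → Monotone d →
        IsLUB (Set.range a) A → IsLUB (Set.range b) B →
        IsLUB (Set.range c) C → IsLUB (Set.range d) D →
        (∀ i, a i + d i - b i - c i ∈ Set.Icc 0 u) →
        Monotone (fun i => a i + d i - b i - c i) →
        (A + D - B - C ∈ Set.Icc 0 u ∧
          IsLUB (Set.range fun i => a i + d i - b i - c i) (A + D - B - C))) ∧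
      (∀ (a b c d : ℕ → G) (A B C D : G),
        (∀ i, a i ∈ Set.Icc 0 u) → (∀ i, b i ∈ Set.Icc 0 u) →
        (∀ i, c i ∈ Set.Icc 0 u) → (∀ i, d i ∈ Set.Icc 0 u) →
        Antitone a → Antitone b → Antitone c → Antitone d →
        IsGLB (Set.range a) A → IsGLB (Set.range b) B →
        IsGLB (Set.range c) C → IsGLB (Set.range d) D →
        (∀ i, a i + d i - b i - c i ∈ Set.Icc 0 u) →
        Antitone (fun i => a i + d i - b i - c i) →
        (A + D - B - C ∈ Set.Icc 0 u ∧
          IsGLB (Set.range fun i => a i + d i - b i - c i) (A + D - B - C))) ∧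
      (∀ (a b c d : ℕ → G) (A B C D : G),
        (∀ i, a i ∈ Set.Icc 0 u) → (∀ i, b i ∈ Set.Icc 0 u) →
        (∀ i, c i ∈ Set.Icc 0 u) → (∀ i, d i ∈ Set.Icc 0 u) →
        Monotone a → Monotone b → Monotone c → Monotone d →
        IsLUB (Set.range a) A → IsLUB (Set.range b) B →
        IsLUB (Set.range c) C → IsLUB (Set.range d) D →
        (∀ i, a i + d i - b i - c i ∈ Set.Icc 0 u) →
        Antitone (fun i => a i + d i - b i - c i) →
        (A + D - B - C ∈ Set.Icc 0 u ∧
          IsGLB (Set.range fun i => a i + d i - b i - c i) (A + D - B - C))) ∧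
      (∀ (a b c d : ℕ → G) (A B C D : G),
        (∀ i, a i ∈ Set.Icc 0 u) → (∀ i, b i ∈ Set.Icc 0 u) →
        (∀ i, c i ∈ Set.Icc 0 u) → (∀ i, d i ∈ Set.Icc 0 u) →
        Antitone a → Antitone b → Antitone c → Antitone d →
        IsGLB (Set.range a) A → IsGLB (Set.range b) B →
        IsGLB (Set.range c) C → IsGLB (Set.range d) D →
        (∀ i, a i + d i - b i - c i ∈ Set.Icc 0 u) →
        Monotone (fun i => a i + d i - b i - c i) →
        (A + D - B - C ∈ Set.Icc 0 u ∧
          IsLUB (Set.range fun i => a i + d i - b i - c i) (A + D - B - C)))) :=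
  statement_1_general g₀ k
end

section
/- Let G be a Dedekind σ-complete abelian lattice-ordered group, M = Γ(ℤ ×ₗ G,(1,0)) the perfect MV-algebra, and F : ℝ² → M a two-dimensional spectral resolution. Then for each t₁ ∈ ℝ ∪ {−∞} and s₁ ∈ ℝ ∪ {+∞}, provided that for every s < s₁ the set {F(s,t) : t > t₁} has a greatest lower bound in M and the set {F(s₁,t) : t > t₁} has a greatest lower bound in M (for s₁ = +∞, F(+∞,t) denotes the least upper bound of {F(s,t) : s ∈ ℝ}, and for t₁ = −∞ the infima are over all t ∈ ℝ), one has: the greatest lower bound of {F(s₁,t) : t > t₁} equals the least upper bound of {⋀{F(s,t) : t > t₁} : s < s₁}. In particular the iterated value F(s₁⁻, t₁⁺) is well defined, i.e. the supremum over s < s₁ of the infima over t > t₁ equals the infimum over t > t₁ of the suprema over s < s₁. -/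
/-!
The volume condition says that for `s ≤ s'` the increment `F s' t - F s t` is nondecreasing
in `t`; taking the supremum over `s' < s₁`, so is `Φ t - F s t`. Hence for `t₁ < t ≤ t'`,
`F s t ≥ Φ t - (Φ t' - F s t') ≥ M - Φ t' + F s t'`, so `m s ≥ M - Φ t' + F s t'` for
every `s < s₁`. Any upper bound `u` of the `m s` therefore satisfies
`F s t' ≤ (u - M) + Φ t'` for all `s < s₁`, whence `Φ t' ≤ (u - M) + Φ t'`, i.e. `M ≤ u`.
-/

open Classical

def TwoIncreasing {α ι κ : Type*} [AddCommGroup α] [Preorder α] [Preorder ι] [Preorder κ]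
    (F : ι → κ → α) : Prop :=
  ∀ ⦃a b : ι⦄ ⦃c d : κ⦄, a ≤ b → c ≤ d → 0 ≤ F b d - F a d - F b c + F a c

namespace TwoIncreasing

variable {α ι κ : Type*} [AddCommGroup α] [PartialOrder α] [IsOrderedAddMonoid α]
  [LinearOrder ι] [LinearOrder κ] {F : ι → κ → α}

theorem sub_le_sub (hF : TwoIncreasing F) {a b : ι} {c d : κ} (hab : a ≤ b) (hcd : c ≤ d) :
    F b c - F a c ≤ F b d - F a d := by
  have := hF hab hcd
  rw [← sub_nonneg]
  convert this using 1
  abel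

theorem lub_sub_le_lub_sub (hF : TwoIncreasing F) (hF₁ : Monotone F) {S : Set ι} {Φ : κ → α}
    {t t' : κ} (hΦt : IsLUB ((F · t) '' S) (Φ t)) (hΦt' : IsLUB ((F · t') '' S) (Φ t'))
    (htt' : t ≤ t') {s : ι} (hs : s ∈ S) :
    Φ t - F s t ≤ Φ t' - F s t' := by
  rw [sub_le_iff_le_add]
  refine hΦt.2 ?_
  rintro _ ⟨s', hs', rfl⟩
  have hmax : max s s' ∈ S := by rcases max_choice s s' with h | h <;> rw [h] <;> assumption
  calc F s' t ≤ F (max s s') t := hF₁ (le_max_right s s') t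
    _ ≤ F (max s s') t' - F s t' + F s t := by
      rw [← sub_le_iff_le_add]; exact hF.sub_le_sub (le_max_left s s') htt'
    _ ≤ Φ t' - F s t' + F s t := by
      gcongr; exact hΦt'.1 ⟨_, hmax, rfl⟩

theorem isLUB_of_isGLB (hF : TwoIncreasing F) (hF₁ : Monotone F) (hF₂ : ∀ s, Monotone (F s))
    {S : Set ι} {T : Set κ} (hT : T.Nonempty) {Φ : κ → α} {m : ι → α} {M : α}
    (hΦ : ∀ t ∈ T, IsLUB ((F · t) '' S) (Φ t)) (hm : ∀ s ∈ S, IsGLB (F s '' T) (m s))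
    (hM : IsGLB (Φ '' T) M) :
    IsLUB (m '' S) M := by
  obtain ⟨t', ht'⟩ := hT
  refine ⟨?_, fun u hu => ?_⟩
  · rintro _ ⟨s, hs, rfl⟩
    refine hM.2 ?_
    rintro _ ⟨t, ht, rfl⟩
    exact ((hm s hs).1 ⟨t, ht, rfl⟩).trans ((hΦ t ht).1 ⟨s, hs, rfl⟩)
  · have hbound : ∀ s ∈ S, F s t' ≤ u - M + Φ t' := by
      intro s hs
      have hlower : M - (Φ t' - F s t') ≤ m s := by
        refine (hm s hs).2 ?_
        rintro _ ⟨t, ht, rfl⟩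
        have hmin : min t t' ∈ T := by
          rcases min_choice t t' with h | h <;> rw [h] <;> assumption
        rw [sub_le_iff_le_add]
        calc M ≤ Φ (min t t') := hM.1 ⟨_, hmin, rfl⟩
          _ ≤ F s (min t t') + (Φ t' - F s t') := by
            rw [← sub_le_iff_le_add']
            exact hF.lub_sub_le_lub_sub hF₁ (hΦ _ hmin) (hΦ t' ht') (min_le_right t t') hs
          _ ≤ F s t + (Φ t' - F s t') := by gcongr; exact hF₂ s (min_le_left t t')
      calc F s t' = M - (Φ t' - F s t') + (Φ t' - M) := by abel
        _ ≤ u + (Φ t' - M) := by gcongr; exact hlower.trans (hu ⟨s, hs, rfl⟩)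
        _ = u - M + Φ t' := by abel
    have hΦt' : Φ t' ≤ u - M + Φ t' :=
      (hΦ t' ht').2 (by rintro _ ⟨s, hs, rfl⟩; exact hbound s hs)
    exact sub_nonneg.1 ((le_add_iff_nonneg_left _).1 hΦt')

end TwoIncreasing

namespace Paper.IsSR2

variable {G : Type*} [AddCommGroup G] [PartialOrder G] {F : ℝ → ℝ → ℤ ×ₗ G}

theorem le_of_le (hF : IsSR2 F) {a b c d : ℝ} (hab : a ≤ b) (hcd : c ≤ d) : F a c ≤ F b d :=
  (hF.leftCont a c).2 <| by
    rintro _ ⟨s, t, hs, ht, rfl⟩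
    exact (hF.leftCont b d).1 ⟨s, t, hs.trans_le hab, ht.trans_le hcd, rfl⟩

theorem twoIncreasing (hF : IsSR2 F) : TwoIncreasing F :=
  fun _ _ _ _ => hF.vol _ _ _ _

theorem isLUB_image_Iio (hF : IsSR2 F) (r t : ℝ) : IsLUB ((F · t) '' Set.Iio r) (F r t) := by
  refine ⟨?_, fun u hu => (hF.leftCont r t).2 ?_⟩
  · rintro _ ⟨s, hs, rfl⟩
    exact hF.le_of_le (le_of_lt hs) le_rfl
  · rintro _ ⟨s, t', hs, ht', rfl⟩
    exact (hF.le_of_le le_rfl ht'.le).trans (hu ⟨s, hs, rfl⟩)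

end Paper.IsSR2

theorem setOf_exists_and_eq_eq_image {β γ : Type*} (p : β → Prop) (f : β → γ) :
    {y | ∃ x, p x ∧ y = f x} = f '' {x | p x} := by
  ext
  simp [eq_comm]

open Paper in
theorem statement_2_general {G : Type*} [AddCommGroup G] [Lattice G]
    [CovariantClass G G (· + ·) (· ≤ ·)]
    (F : ℝ → ℝ → ℤ ×ₗ G) (hF : IsSR2 F)
    (s₁ : EReal) (hs₁ : s₁ ≠ ⊥) (t₁ : EReal) (ht₁ : t₁ ≠ ⊤)
    (Φ : ℝ → ℤ ×ₗ G)
    (hΦreal : ∀ s : ℝ, s₁ = (s : EReal) → ∀ t : ℝ, Φ t = F s t)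
    (hΦtop : s₁ = ⊤ → ∀ t : ℝ, IsLUB {y | ∃ s : ℝ, y = F s t} (Φ t))
    (m : ℝ → ℤ ×ₗ G)
    (hm : ∀ s : ℝ, (s : EReal) < s₁ →
      IsGLB {y | ∃ t : ℝ, t₁ < (t : EReal) ∧ y = F s t} (m s))
    (M : ℤ ×ₗ G)
    (hM : IsGLB {y | ∃ t : ℝ, t₁ < (t : EReal) ∧ y = Φ t} M) :
    IsLUB {y | ∃ s : ℝ, (s : EReal) < s₁ ∧ y = m s} M := by
  have : IsOrderedAddMonoid G := { add_le_add_left := fun _ _ h c => add_le_add_left h c }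
  have hΦ : ∀ t, IsLUB ((F · t) '' {s : ℝ | (s : EReal) < s₁}) (Φ t) := by
    induction s₁ using EReal.rec with
    | bot => exact absurd rfl hs₁
    | coe r =>
      intro t
      rw [hΦreal r rfl t]
      simp only [EReal.coe_lt_coe_iff]
      exact hF.isLUB_image_Iio r t
    | top =>
      intro t
      simpa [Set.range, eq_comm] using hΦtop rfl t
  obtain ⟨t, ht, -⟩ := EReal.lt_iff_exists_real_btwn.1 (lt_top_iff_ne_top.2 ht₁)
  simp only [setOf_exists_and_eq_eq_image] at hm hM ⊢
  exact hF.twoIncreasing.isLUB_of_isGLB (fun _ _ h t => hF.le_of_le h le_rfl)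
    (fun _ _ _ h => hF.le_of_le le_rfl h) ⟨t, ht⟩ (fun t _ => hΦ t) hm hM

open Paper in
/-- Lemma 2.3: for a two-dimensional spectral resolution `F` on the perfect
MV-algebra `Γ(ℤ ×ₗ G,(1,0))` and thresholds `s₁ ∈ ℝ ∪ {+∞}`, `t₁ ∈ ℝ ∪ {-∞}`, the
suprema over `s < s₁` of the infima over `t > t₁` equal the infimum over `t > t₁` of
`F(s₁,·)` (where `F(+∞,t)` denotes the supremum over `s`); provided all the infima exist. -/
theorem statement_2 {G : Type*} [AddCommGroup G] [Lattice G]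
    [CovariantClass G G (· + ·) (· ≤ ·)]
    (hsc : DedekindSC G)
    (F : ℝ → ℝ → ℤ ×ₗ G) (hF : IsSR2 F)
    (s₁ : EReal) (hs₁ : s₁ ≠ ⊥) (t₁ : EReal) (ht₁ : t₁ ≠ ⊤)
    (Φ : ℝ → ℤ ×ₗ G)
    (hΦreal : ∀ s : ℝ, s₁ = (s : EReal) → ∀ t : ℝ, Φ t = F s t)
    (hΦtop : s₁ = ⊤ → ∀ t : ℝ, IsLUB {y | ∃ s : ℝ, y = F s t} (Φ t))
    (m : ℝ → ℤ ×ₗ G)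
    (hm : ∀ s : ℝ, (s : EReal) < s₁ →
      IsGLB {y | ∃ t : ℝ, t₁ < (t : EReal) ∧ y = F s t} (m s))
    (M : ℤ ×ₗ G)
    (hM : IsGLB {y | ∃ t : ℝ, t₁ < (t : EReal) ∧ y = Φ t} M) :
    IsLUB {y | ∃ s : ℝ, (s : EReal) < s₁ ∧ y = m s} M :=
  statement_2_general F hF s₁ hs₁ t₁ ht₁ Φ hΦreal hΦtop m hm M hM
end

section
/- Let G be a directed partially ordered abelian group with the Riesz interpolation property which is Dedekind monotone σ-complete, let k ≥ 1, and let E = {a ∈ ℤ ×ₗ G : (0,0) ≤ a ≤ (k,0)}. For each δ ∈ {0,1}ⁿ let (a_δ^i)_{i∈ℕ} be a sequence in E, and let π(δ) denote the number of zero coordinates of δ. Suppose all the sequences (a_δ^i)_i are nondecreasing (respectively, all nonincreasing) with least upper bounds (respectively, greatest lower bounds) a_δ, and suppose the sequence S_i = Σ_{δ∈{0,1}ⁿ} (−1)^{π(δ)} a_δ^i takes values in E and is nondecreasing or nonincreasing. Then: if (S_i) is nondecreasing, its least upper bound exists and equals Σ_δ (−1)^{π(δ)} a_δ; if (S_i)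 is nonincreasing, its greatest lower bound exists and equals Σ_δ (−1)^{π(δ)} a_δ. This holds in each of the four combinations: the (a_δ^i)_i all nondecreasing or all nonincreasing, and (S_i) nondecreasing or nonincreasing. -/
open Classical

namespace Paper

/-- The alternating sum `Σ_{δ ∈ {0,1}ⁿ} (-1)^{π(δ)} a_δ`, where `π(δ)` is the number of
zero (here: `false`) coordinates of `δ`. -/
def signSum {M : Type*} [AddCommGroup M] {n : ℕ} (a : (Fin n → Bool) → M) : M :=
  ∑ δ : Fin n → Bool,
    (-1 : ℤ) ^ (Finset.univ.filter fun j => δ j = false).card • a δ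

end Paper

/-!
Splitting the signs, `S_i = P_i - Q_i`, where `P` and `Q` sum the `a_δ^i` over the `δ` with
`π(δ)` even, resp. odd. For nondecreasing sequences over a directed index, the sequence
`f_i + g_i` has the same upper bounds as the set `{f_i + g_j}`, so suprema add along such sums;
this gives `sup P` and `sup Q`. Writing `P = Q + S` (when `S` is nondecreasing) or
`Q = P + (-S)` (when `S` is nonincreasing) as a sum of two nondecreasing sequences then
identifies `sup S = sup P - sup Q`, resp. `inf S = sup P - sup Q`. Nonincreasing families are
the same statements in the order dual.
-/

open Set
open scoped Pointwise

section
variable {M : Type*} [AddCommGroup M] [PartialOrder M] [IsOrderedAddMonoid M]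

theorem IsLUB.sub_of_add {s t : Set M} {a b : M} (h : IsLUB (s + t) a) (hs : IsLUB s b) :
    IsLUB t (a - b) := by
  refine ⟨fun y hy => ?_, fun u hu => ?_⟩
  · have : b ≤ a - y := hs.2 fun x hx => le_sub_iff_add_le.2 (h.1 (add_mem_add hx hy))
    exact le_sub_comm.1 this
  · exact sub_le_iff_le_add.2 (add_comm u b ▸ h.2 (add_mem_upperBounds_add hs.1 hu))

variable {ι : Type*} [Preorder ι] [IsDirected ι (· ≤ ·)]

theorem upperBounds_range_add {f g : ι → M} (hf : Monotone f) (hg : Monotone g) :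
    upperBounds (range fun i => f i + g i) = upperBounds (range f + range g) := by
  refine Subset.antisymm (fun u hu => ?_) (upperBounds_mono_set ?_)
  · rintro _ ⟨_, ⟨i, rfl⟩, _, ⟨j, rfl⟩, rfl⟩
    obtain ⟨k, hik, hjk⟩ := directed_of (· ≤ ·) i j
    exact (add_le_add (hf hik) (hg hjk)).trans (hu ⟨k, rfl⟩)
  · rintro _ ⟨i, rfl⟩
    exact add_mem_add (mem_range_self i) (mem_range_self i)

theorem IsLUB.range_add {f g : ι → M} {a b : M} (hf : Monotone f) (hg : Monotone g)
    (ha : IsLUB (range f) a) (hb : IsLUB (range g) b) :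
    IsLUB (range fun i => f i + g i) (a + b) := by
  rw [IsLUB, upperBounds_range_add hf hg]
  exact ha.add hb

theorem isLUB_range_sub_of_monotone_s5 {P Q : ι → M} {p q : M} (hQ : Monotone Q)
    (hPQ : Monotone fun i => P i - Q i) (hp : IsLUB (range P) p) (hq : IsLUB (range Q) q) :
    IsLUB (range fun i => P i - Q i) (p - q) := by
  have h : IsLUB (range Q + range fun i => P i - Q i) p := by
    rw [IsLUB, ← upperBounds_range_add hQ hPQ]
    simp only [add_sub_cancel]
    exact hp
  exact h.sub_of_add hq

theorem isGLB_range_sub_of_antitone_s5 {P Q : ι → M} {p q : M} (hP : Monotone P)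
    (hPQ : Antitone fun i => P i - Q i) (hp : IsLUB (range P) p) (hq : IsLUB (range Q) q) :
    IsGLB (range fun i => P i - Q i) (p - q) := by
  have hQP : Monotone fun i => Q i - P i := fun i j hij => by
    simpa only [neg_sub] using neg_le_neg (hPQ hij)
  have h : IsLUB (range P + range fun i => Q i - P i) q := by
    rw [IsLUB, ← upperBounds_range_add hP hQP]
    simp only [add_sub_cancel]
    exact hq
  simpa only [neg_range, neg_sub] using (h.sub_of_add hp).neg

theorem isLUB_range_sum [Nonempty ι] {κ : Type*} (s : Finset κ) {f : κ → ι → M}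
    {A : κ → M} (hf : ∀ δ ∈ s, Monotone (f δ)) (hA : ∀ δ ∈ s, IsLUB (range (f δ)) (A δ)) :
    IsLUB (range fun i => ∑ δ ∈ s, f δ i) (∑ δ ∈ s, A δ) := by
  induction s using Finset.cons_induction with
  | empty => simpa only [Finset.sum_empty, range_const] using isLUB_singleton
  | cons δ s _ ih =>
    simp only [Finset.sum_cons]
    simp only [Finset.mem_cons, forall_eq_or_imp] at hf hA
    exact hA.1.range_add hf.1 (fun i j hij => Finset.sum_le_sum fun γ hγ => hf.2 γ hγ hij)
      (ih hf.2 hA.2)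

end

theorem Finset.sum_neg_one_pow_zsmul_eq_sub {M β : Type*} [AddCommGroup M] (s : Finset β)
    (π : β → ℕ) (x : β → M) :
    ∑ δ ∈ s, (-1 : ℤ) ^ π δ • x δ =
      ∑ δ ∈ s with Even (π δ), x δ - ∑ δ ∈ s with ¬Even (π δ), x δ := by
  rw [← Finset.sum_filter_add_sum_filter_not s (fun δ => Even (π δ)), sub_eq_add_neg,
    ← Finset.sum_neg_distrib]
  congr 1 <;> refine Finset.sum_congr rfl fun δ hδ => ?_
  · rw [(Finset.mem_filter.1 hδ).2.neg_one_pow, one_zsmul]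
  · rw [(Nat.not_even_iff_odd.1 (Finset.mem_filter.1 hδ).2).neg_one_pow, neg_one_zsmul]

namespace Paper

variable {M : Type*} [AddCommGroup M] [PartialOrder M] [IsOrderedAddMonoid M]
  {ι : Type*} [Preorder ι] [IsDirected ι (· ≤ ·)] [Nonempty ι]
  {n : ℕ} {a : (Fin n → Bool) → ι → M} {A : (Fin n → Bool) → M}

theorem isLUB_range_signSum_of_monotone (ha : ∀ δ, Monotone (a δ))
    (hA : ∀ δ, IsLUB (range (a δ)) (A δ)) (hS : Monotone fun i => signSum fun δ => a δ i) :
    IsLUB (range fun i => signSum fun δ => a δ i) (signSum A) := by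
  simp only [signSum, Finset.sum_neg_one_pow_zsmul_eq_sub] at hS ⊢
  exact isLUB_range_sub_of_monotone_s5 (fun i j hij => Finset.sum_le_sum fun δ _ => ha δ hij) hS
    (isLUB_range_sum _ (fun δ _ => ha δ) fun δ _ => hA δ)
    (isLUB_range_sum _ (fun δ _ => ha δ) fun δ _ => hA δ)

theorem isGLB_range_signSum_of_antitone (ha : ∀ δ, Monotone (a δ))
    (hA : ∀ δ, IsLUB (range (a δ)) (A δ)) (hS : Antitone fun i => signSum fun δ => a δ i) :
    IsGLB (range fun i => signSum fun δ => a δ i) (signSum A) := by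
  simp only [signSum, Finset.sum_neg_one_pow_zsmul_eq_sub] at hS ⊢
  exact isGLB_range_sub_of_antitone_s5 (fun i j hij => Finset.sum_le_sum fun δ _ => ha δ hij) hS
    (isLUB_range_sum _ (fun δ _ => ha δ) fun δ _ => hA δ)
    (isLUB_range_sum _ (fun δ _ => ha δ) fun δ _ => hA δ)

end Paper

open Paper in
theorem statement_5_general {G : Type*} [AddCommGroup G] [PartialOrder G]
    [CovariantClass G G (· + ·) (· ≤ ·)]
    {n : ℕ}
    (a : (Fin n → Bool) → ℕ → ℤ ×ₗ G) (A : (Fin n → Bool) → ℤ ×ₗ G) :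
    -- all `(a_δ)` nondecreasing, `S` nondecreasing
    ((∀ δ, Monotone (a δ)) → (∀ δ, IsLUB (Set.range (a δ)) (A δ)) →
      Monotone (fun i => signSum (fun δ => a δ i)) →
      IsLUB (Set.range fun i => signSum (fun δ => a δ i)) (signSum A)) ∧
    -- all `(a_δ)` nondecreasing, `S` nonincreasing
    ((∀ δ, Monotone (a δ)) → (∀ δ, IsLUB (Set.range (a δ)) (A δ)) →
      Antitone (fun i => signSum (fun δ => a δ i)) →
      IsGLB (Set.range fun i => signSum (fun δ => a δ i)) (signSum A)) ∧
    -- all `(a_δ)` nonincreasing, `S` nondecreasing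
    ((∀ δ, Antitone (a δ)) → (∀ δ, IsGLB (Set.range (a δ)) (A δ)) →
      Monotone (fun i => signSum (fun δ => a δ i)) →
      IsLUB (Set.range fun i => signSum (fun δ => a δ i)) (signSum A)) ∧
    -- all `(a_δ)` nonincreasing, `S` nonincreasing
    ((∀ δ, Antitone (a δ)) → (∀ δ, IsGLB (Set.range (a δ)) (A δ)) →
      Antitone (fun i => signSum (fun δ => a δ i)) →
      IsGLB (Set.range fun i => signSum (fun δ => a δ i)) (signSum A)) := by
  have : IsOrderedAddMonoid G :=
    ⟨fun _ _ h c => add_le_add_left h c, fun _ _ h c => add_le_add_right h c⟩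
  exact ⟨isLUB_range_signSum_of_monotone, isGLB_range_signSum_of_antitone,
    isGLB_range_signSum_of_antitone (M := (ℤ ×ₗ G)ᵒᵈ),
    isLUB_range_signSum_of_monotone (M := (ℤ ×ₗ G)ᵒᵈ)⟩

open Paper in
/-- Lemma 3.1: limits of monotone sequences of alternating sums
`S_i = Σ_δ (-1)^{π(δ)} a_δ^i` with values in `E = Γ(ℤ ×ₗ G,(k,0))`, in all four
monotonicity combinations. -/
theorem statement_5 {G : Type*} [AddCommGroup G] [PartialOrder G]
    [CovariantClass G G (· + ·) (· ≤ ·)]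
    (hdir : DirectedPO G) (hip : RieszInterp G) (hsc : MonSigmaComplete G)
    (k : ℤ) (hk : 1 ≤ k) {n : ℕ}
    (a : (Fin n → Bool) → ℕ → ℤ ×ₗ G) (A : (Fin n → Bool) → ℤ ×ₗ G)
    (hmem : ∀ δ i, a δ i ∈ Ek G k)
    (hS : ∀ i, signSum (fun δ => a δ i) ∈ Ek G k) :
    -- all `(a_δ)` nondecreasing, `S` nondecreasing
    ((∀ δ, Monotone (a δ)) → (∀ δ, IsLUB (Set.range (a δ)) (A δ)) →
      Monotone (fun i => signSum (fun δ => a δ i)) →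
      IsLUB (Set.range fun i => signSum (fun δ => a δ i)) (signSum A)) ∧
    -- all `(a_δ)` nondecreasing, `S` nonincreasing
    ((∀ δ, Monotone (a δ)) → (∀ δ, IsLUB (Set.range (a δ)) (A δ)) →
      Antitone (fun i => signSum (fun δ => a δ i)) →
      IsGLB (Set.range fun i => signSum (fun δ => a δ i)) (signSum A)) ∧
    -- all `(a_δ)` nonincreasing, `S` nondecreasing
    ((∀ δ, Antitone (a δ)) → (∀ δ, IsGLB (Set.range (a δ)) (A δ)) →
      Monotone (fun i => signSum (fun δ => a δ i)) →
      IsLUB (Set.range fun i => signSum (fun δ => a δ i)) (signSum A)) ∧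
    -- all `(a_δ)` nonincreasing, `S` nonincreasing
    ((∀ δ, Antitone (a δ)) → (∀ δ, IsGLB (Set.range (a δ)) (A δ)) →
      Antitone (fun i => signSum (fun δ => a δ i)) →
      IsGLB (Set.range fun i => signSum (fun δ => a δ i)) (signSum A)) :=
  statement_5_general a A
end

section
/- Let L be a linearly ordered abelian group and let F₁,…,Fₙ : ℝ → L (n ≥ 2) be functions each satisfying the one-dimensional volume condition, i.e. each Fᵢ is nondecreasing. Define F(s₁,…,sₙ) = min{F₁(s₁),…,Fₙ(sₙ)}. Then F satisfies the n-dimensional volume condition: Δ₁(a₁,b₁)⋯Δₙ(aₙ,bₙ)F ≥ 0 for all reals aᵢ ≤ bᵢ. Moreover, given A = [a₁,b₁) × ⋯ × [aₙ,bₙ), if F₁(a₁) ≤ F₂(a₂) ≤ ⋯ ≤ Fₙ(aₙ), then Δ₁(a₁,b₁)⋯Δₙ(aₙ,bₙ)F = min_{1≤i≤n−1} (min{Fᵢ(bᵢ), Fₙ(bₙ)}) − min_{1≤i≤n−1} (min{Fᵢ(bᵢ), Fₙ(aₙ)}). -/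
open Classical

/-!
Peeling off the first coordinate turns `min_i Fᵢ(sᵢ)` into `min_{i ≥ 2} g(Fᵢ(sᵢ))` with
`g c = c ⊓ F₁(b₁) - c ⊓ F₁(a₁)`: this is the first difference of `min(F₁(·), c)`, and a monotone
map commutes with `min`. Since `g` is monotone, induction on the dimension reduces the volume to
the increment of one monotone function, which is nonnegative. If `F₁(a₁) ≤ ⋯ ≤ Fₙ(aₙ)`, every
value fed to `g` is at least `F₁(a₁)`, where `g c = c ⊓ F₁(b₁) - F₁(a₁)`; in the difference of
two such values the constant cancels and `F₁(b₁)` joins the minimum, which yields the formula.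
-/

open Finset

namespace Paper

section VolSum

variable {M : Type*} [AddCommGroup M]

theorem volSum_eq_sum_bool {ι : Type*} [Fintype ι] [DecidableEq ι] (F : (ι → ℝ) → M)
    (a b : ι → ℝ) :
    volSum F a b = ∑ δ : ι → Bool, (∏ i, if δ i then (1 : ℤ) else -1) •
      F (fun i => if δ i then b i else a i) := by
  refine Fintype.sum_equiv ⟨fun S i => decide (i ∈ S), fun δ => univ.filter fun i => δ i,
      fun S => by ext; simp, fun δ => by funext; simp⟩ _ _ fun S => ?_
  simp only [Equiv.coe_fn_mk, decide_eq_true_eq, prod_ite, prod_const_one, one_mul,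
    prod_const, filter_notMem_eq_sdiff, card_univ_sdiff]

theorem volSum_fin_succ {k : ℕ} (F : (Fin (k + 1) → ℝ) → M) (a b : Fin (k + 1) → ℝ) :
    volSum F a b = volSum (fun s => F (Fin.cons (b 0) s) - F (Fin.cons (a 0) s))
      (Fin.tail a) (Fin.tail b) := by
  simp only [volSum_eq_sum_bool]
  rw [← (Fin.consEquiv fun _ => Bool).sum_comp, Fintype.sum_prod_type, Fintype.sum_bool,
    ← sum_add_distrib]
  refine sum_congr rfl fun δ _ => ?_
  simp only [Fin.consEquiv_apply]
  have hcorner : ∀ x : Bool,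
      (fun i => if (Fin.cons x δ : Fin (k + 1) → Bool) i then b i else a i) =
        Fin.cons (if x then b 0 else a 0) (fun j => if δ j then Fin.tail b j else Fin.tail a j) := by
    intro x; funext i
    refine Fin.cases ?_ (fun j => ?_) i <;> simp [Fin.tail]
  rw [hcorner, hcorner, Fin.prod_univ_succ, Fin.prod_univ_succ]
  simp [sub_eq_add_neg]

theorem volSum_fin_one (F : (Fin 1 → ℝ) → M) (a b : Fin 1 → ℝ) :
    volSum F a b = F b - F a := by
  rw [volSum_eq_sum_bool, ← (Equiv.funUnique (Fin 1) Bool).symm.sum_comp, Fintype.sum_bool]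
  simp [sub_eq_add_neg]

end VolSum

theorem inf'_univ_fin_succ {α : Type*} [SemilatticeInf α] {k : ℕ} (f : Fin (k + 2) → α) :
    univ.inf' univ_nonempty f =
      f 0 ⊓ univ.inf' univ_nonempty (fun i : Fin (k + 1) => f i.succ) := by
  refine le_antisymm (le_inf (inf'_le _ (mem_univ 0))
    (le_inf' _ _ fun i _ => inf'_le _ (mem_univ _))) (le_inf' _ _ fun j _ => ?_)
  refine Fin.cases ?_ (fun i => ?_) j
  · exact inf_le_left
  · exact inf_le_right.trans (inf'_le _ (mem_univ i))

section CoordMin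

variable {L : Type*} [LinearOrder L]

def coordMin {ι : Type*} [Fintype ι] [Nonempty ι] (F : ι → ℝ → L) (s : ι → ℝ) : L :=
  univ.inf' univ_nonempty fun i => F i (s i)

theorem coordMin_fin_one (F : Fin 1 → ℝ → L) (s : Fin 1 → ℝ) : coordMin F s = F 0 (s 0) := by
  simp [coordMin, univ_unique]

theorem coordMin_fin_succ {k : ℕ} (F : Fin (k + 2) → ℝ → L) (s : Fin (k + 2) → ℝ) :
    coordMin F s = F 0 (s 0) ⊓ coordMin (Fin.tail F) (Fin.tail s) :=
  inf'_univ_fin_succ _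

theorem coordMin_comp {ι : Type*} [Fintype ι] [Nonempty ι] {g : L → L} (hg : Monotone g)
    (F : ι → ℝ → L) (s : ι → ℝ) : coordMin (fun i => g ∘ F i) s = g (coordMin F s) :=
  (apply_inf'_eq_inf'_comp _ g fun _ _ => hg.map_min).symm

end CoordMin

section OrderedGroup

variable {L : Type*} [AddCommGroup L] [LinearOrder L] [IsOrderedAddMonoid L]

theorem monotone_inf_sub_inf {m M : L} (h : m ≤ M) : Monotone fun c : L => c ⊓ M - c ⊓ m := by
  intro c c' hc
  dsimp only
  rcases le_total c m with hcm | hmc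
  · rw [inf_eq_left.2 (hcm.trans h), inf_eq_left.2 hcm, sub_self]
    exact sub_nonneg.2 (inf_le_inf_left c' h)
  · rw [inf_eq_right.2 hmc, inf_eq_right.2 (hmc.trans hc)]
    exact sub_le_sub_right (inf_le_inf_right M hc) m

theorem volSum_coordMin_fin_succ {k : ℕ} (F : Fin (k + 2) → ℝ → L) (a b : Fin (k + 2) → ℝ)
    (h : F 0 (a 0) ≤ F 0 (b 0)) :
    volSum (coordMin F) a b =
      volSum (coordMin fun i => (fun c => c ⊓ F 0 (b 0) - c ⊓ F 0 (a 0)) ∘ F i.succ)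
        (Fin.tail a) (Fin.tail b) := by
  rw [volSum_fin_succ]
  congr 1
  funext s
  rw [coordMin_fin_succ, coordMin_fin_succ, coordMin_comp (monotone_inf_sub_inf h)]
  simp only [Fin.cons_zero, Fin.tail_cons, inf_comm (F 0 _)]
  rfl

theorem volSum_coordMin_nonneg : ∀ {k : ℕ} (F : Fin (k + 1) → ℝ → L), (∀ i, Monotone (F i)) →
    ∀ a b : Fin (k + 1) → ℝ, (∀ i, a i ≤ b i) → 0 ≤ volSum (coordMin F) a b
  | 0, F, hF, a, b, hab => by
    rw [volSum_fin_one, coordMin_fin_one, coordMin_fin_one]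
    exact sub_nonneg.2 (hF 0 (hab 0))
  | _ + 1, F, hF, a, b, hab => by
    rw [volSum_coordMin_fin_succ F a b (hF 0 (hab 0))]
    exact volSum_coordMin_nonneg _
      (fun i => (monotone_inf_sub_inf (hF 0 (hab 0))).comp (hF i.succ)) _ _ fun i => hab i.succ

theorem volSum_coordMin_eq_of_monotone_lower : ∀ {k : ℕ} (F : Fin (k + 2) → ℝ → L),
    (∀ i, Monotone (F i)) → ∀ a b : Fin (k + 2) → ℝ, (∀ i, a i ≤ b i) →
    Monotone (fun i => F i (a i)) →
    volSum (coordMin F) a b =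
      coordMin (Fin.init F) (Fin.init b) ⊓ F (Fin.last _) (b (Fin.last _)) -
        coordMin (Fin.init F) (Fin.init b) ⊓ F (Fin.last _) (a (Fin.last _))
  | k, F, hF, a, b, hab, ha => by
    have h0 := hF 0 (hab 0)
    have hg := monotone_inf_sub_inf h0
    have hg_sub : ∀ {u v}, F 0 (a 0) ≤ u → F 0 (a 0) ≤ v →
        (u ⊓ F 0 (b 0) - u ⊓ F 0 (a 0)) - (v ⊓ F 0 (b 0) - v ⊓ F 0 (a 0)) =
          u ⊓ F 0 (b 0) - v ⊓ F 0 (b 0) := fun hu hv => by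
      rw [inf_eq_right.2 hu, inf_eq_right.2 hv, sub_sub_sub_cancel_right]
    have ha0 : ∀ j, F 0 (a 0) ≤ F j (a j) := fun j => ha (Fin.zero_le j)
    have hb0 : ∀ j, F 0 (a 0) ≤ F j (b j) := fun j => (ha0 j).trans (hF j (hab j))
    rw [volSum_coordMin_fin_succ F a b h0]
    match k with
    | 0 =>
      rw [volSum_fin_one, coordMin_fin_one, coordMin_fin_one, coordMin_fin_one]
      exact (hg_sub (hb0 1) (ha0 1)).trans (by rw [inf_comm _ (F 0 _), inf_comm _ (F 0 _)]; rfl)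
    | j + 1 =>
      rw [volSum_coordMin_eq_of_monotone_lower _ (fun i => hg.comp (hF i.succ)) (Fin.tail a)
        (Fin.tail b) (fun i => hab i.succ) (hg.comp (ha.comp Fin.strictMono_succ.monotone))]
      set B := coordMin (Fin.tail (Fin.init F)) (Fin.tail (Fin.init b))
      have hB : F 0 (a 0) ≤ B := le_inf' _ _ fun _ _ => hb0 _
      have hB_init : coordMin (Fin.init F) (Fin.init b) = F 0 (b 0) ⊓ B := coordMin_fin_succ _ _
      have hB_tail :
          coordMin (Fin.init fun i => (fun c => c ⊓ F 0 (b 0) - c ⊓ F 0 (a 0)) ∘ F i.succ)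
            (Fin.init (Fin.tail b)) = B ⊓ F 0 (b 0) - B ⊓ F 0 (a 0) := coordMin_comp hg _ _
      rw [hB_init, hB_tail]
      simp only [Function.comp_apply, Fin.tail, Fin.succ_last]
      rw [← hg.map_min, ← hg.map_min, hg_sub (le_min hB (hb0 _)) (le_min hB (ha0 _))]
      ac_rfl

end OrderedGroup

end Paper

open Paper in
/-- Claim in Theorem 5.2: if `F₁,…,Fₙ : ℝ → L` (`n ≥ 2`, `L` a linearly
ordered abelian group) are nondecreasing, then `F(s̄) = min_i Fᵢ(sᵢ)` satisfies the
`n`-dimensional volume condition; moreover if `F₁(a₁) ≤ ⋯ ≤ Fₙ(aₙ)` then the volume of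
`[a₁,b₁) × ⋯ × [aₙ,bₙ)` equals
`min_{i<n}(Fᵢ(bᵢ) ⊓ Fₙ(bₙ)) − min_{i<n}(Fᵢ(bᵢ) ⊓ Fₙ(aₙ))`. -/
theorem statement_19 {L : Type*} [AddCommGroup L] [LinearOrder L] [IsOrderedAddMonoid L]
    (n : ℕ) (Fi : Fin (n + 2) → ℝ → L) (hFi : ∀ i, Monotone (Fi i)) :
    (∀ a b : Fin (n + 2) → ℝ, (∀ i, a i ≤ b i) →
      0 ≤ volSum (fun s : Fin (n + 2) → ℝ =>
        Finset.univ.inf' Finset.univ_nonempty fun i => Fi i (s i)) a b) ∧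
    (∀ a b : Fin (n + 2) → ℝ, (∀ i, a i ≤ b i) →
      (∀ i j : Fin (n + 2), i ≤ j → Fi i (a i) ≤ Fi j (a j)) →
      volSum (fun s : Fin (n + 2) → ℝ =>
          Finset.univ.inf' Finset.univ_nonempty fun i => Fi i (s i)) a b =
        (Finset.univ.inf' Finset.univ_nonempty fun i : Fin (n + 1) =>
          Fi i.castSucc (b i.castSucc) ⊓ Fi (Fin.last (n + 1)) (b (Fin.last (n + 1)))) -
        (Finset.univ.inf' Finset.univ_nonempty fun i : Fin (n + 1) =>
          Fi i.castSucc (b i.castSucc) ⊓ Fi (Fin.last (n + 1)) (a (Fin.last (n + 1))))) := by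
  refine ⟨volSum_coordMin_nonneg Fi hFi, fun a b hab hord => ?_⟩
  have hinf_right : ∀ c : L, (Finset.univ.inf' Finset.univ_nonempty fun i : Fin (n + 1) =>
      Fi i.castSucc (b i.castSucc) ⊓ c) = coordMin (Fin.init Fi) (Fin.init b) ⊓ c :=
    fun c => coordMin_comp (monotone_id.inf monotone_const) _ _
  rw [hinf_right, hinf_right]
  exact volSum_coordMin_eq_of_monotone_lower Fi hFi a b hab fun i j => hord i j
end
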